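/- arXiv:2207.12351 — 5 statements merged into one kernel-verified Lean document; each statement's English description precedes it below -/
import Mathlib

section
/- Let z ∈ ℍ be a point of the upper half-plane whose imaginary part is maximal within its orbit under the group A₀(N) generated by Γ₀(N) and all Atkin–Lehner operators, where N is a squarefree natural number. Then Im(z) ≥ √3/(2N), and for every pair of integers (c,d) ≠ (0,0) one has |cz + d|² ≥ gcd(c,N)/N. -/
open Complex

/-- The action of a real matrix `[[a,b],[c,d]]` of positive determinant on the upper
half-plane, written on `ℂ`. -/
noncomputable def moebius (a b c d : ℝ) (z : ℂ) : ℂ :=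
  ((a : ℂ) * z + b) / ((c : ℂ) * z + d)

/-!
The proof only uses the Atkin–Lehner elements of `A₀(N)`. For a pair `(c, d)` with
`gcd(c, d) = 1`, put `g = gcd(c, N)` and `Q = N / g`; since `N` is squarefree, `Q` is an exact
divisor of `N` and `gcd(c, Q) = 1`, so `u c + v Q d = 1` for some integers `u, v`, and
`[[Q v, -u], [Q c, Q d]]` is an Atkin–Lehner matrix of determinant `Q`. Maximality of `Im z`
gives `Q ≤ |Q c z + Q d|²`, i.e. `|c z + d|² ≥ 1/Q = g/N`. Pairs with a common factor `e` reduce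
to this, since `|c z + d|²` scales by `e²` while `gcd(c, N)` grows at most by `e`. Finally
`(c, d) = (N, -n)` with `n` the integer nearest to `N Re z` gives `|N z - n|² ≥ 1` with
`|N Re z - n| ≤ 1/2`, whence `(N Im z)² ≥ 3/4`.
-/

def IsImMaxOnAtkinLehnerOrbit (N : ℕ) (z : ℂ) : Prop :=
  ∀ (a b c d : ℤ) (Q : ℕ), Q ∣ N → Nat.Coprime Q (N / Q) →
    (N : ℤ) ∣ c → (Q : ℤ) ∣ a → (Q : ℤ) ∣ d → a * d - b * c = (Q : ℤ) →
    (moebius a b c d z).im ≤ z.im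

lemma moebius_im (a b c d : ℝ) (z : ℂ) :
    (moebius a b c d z).im = (a * d - b * c) * z.im / normSq (c * z + d) := by
  simp only [moebius, div_im, normSq_apply, add_re, add_im, mul_re, mul_im, ofReal_re, ofReal_im]
  ring

lemma ofReal_mul_add_ofReal_ne_zero {z : ℂ} (hz : 0 < z.im) {c d : ℝ} (hcd : (c, d) ≠ (0, 0)) :
    (c : ℂ) * z + d ≠ 0 := by
  intro h
  have hc : c = 0 := by
    simpa [hz.ne'] using congrArg im h
  have hd : d = 0 := by
    simpa [hc] using congrArg re h
  exact hcd (by rw [hc, hd])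

lemma det_le_normSq_of_im_moebius_le {a b c d : ℝ} {z : ℂ} (hz : 0 < z.im)
    (hdet : 0 < a * d - b * c) (h : (moebius a b c d z).im ≤ z.im) :
    a * d - b * c ≤ normSq (c * z + d) := by
  have hcd : (c, d) ≠ (0, 0) := by
    rintro ⟨⟩
    simp at hdet
  have hpos : 0 < normSq (c * z + d) := normSq_pos.mpr (ofReal_mul_add_ofReal_ne_zero hz hcd)
  rw [moebius_im, div_le_iff₀ hpos] at h
  nlinarith

lemma Squarefree.isCoprime_div_gcd {N : ℕ} (hsf : Squarefree N) (c : ℤ) :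
    IsCoprime c ((N / Int.gcd c N : ℕ) : ℤ) := by
  rw [Int.isCoprime_iff_gcd_eq_one]
  rcases eq_or_ne c 0 with rfl | hc
  · simp [Nat.div_self (Nat.pos_of_ne_zero hsf.ne_zero)]
  · have := Nat.coprime_div_gcd_of_squarefree hsf (Int.natAbs_ne_zero.mpr hc)
    rw [Nat.gcd_comm] at this
    exact this.symm

lemma Int.gcd_mul_natCast_dvd (m : ℤ) (n k : ℕ) : Int.gcd (m * n) k ∣ n * Int.gcd m k := by
  simp only [Int.gcd, Int.natAbs_mul, Int.natAbs_natCast]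
  rw [mul_comm n, ← Nat.gcd_mul_right]
  exact Nat.gcd_dvd_gcd_of_dvd_right _ (dvd_mul_right _ _)

lemma normSq_natCast_mul (n : ℕ) (w : ℂ) : normSq (n * w) = n ^ 2 * normSq w := by
  rw [normSq_mul, normSq_natCast, sq]

namespace IsImMaxOnAtkinLehnerOrbit

variable {N : ℕ} {z : ℂ}

lemma le_normSq (hmax : IsImMaxOnAtkinLehnerOrbit N z) (hN : 0 < N) (hz : 0 < z.im)
    {a b c d : ℤ} {Q : ℕ} (hQN : Q ∣ N) (hQ : Nat.Coprime Q (N / Q)) (hc : (N : ℤ) ∣ c)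
    (ha : (Q : ℤ) ∣ a) (hd : (Q : ℤ) ∣ d) (hdet : a * d - b * c = Q) :
    (Q : ℝ) ≤ normSq (c * z + d) := by
  have hdetR : (a : ℝ) * d - b * c = Q := by exact_mod_cast hdet
  have hQpos : (0 : ℝ) < Q := by exact_mod_cast Nat.pos_of_dvd_of_pos hQN hN
  have := det_le_normSq_of_im_moebius_le hz (hdetR ▸ hQpos) (hmax a b c d Q hQN hQ hc ha hd hdet)
  rwa [hdetR] at this

lemma gcd_div_le_normSq_of_isCoprime (hmax : IsImMaxOnAtkinLehnerOrbit N z) (hN : 0 < N)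
    (hsf : Squarefree N) (hz : 0 < z.im) {c d : ℤ} (hcd : IsCoprime c d) :
    (Int.gcd c N : ℝ) / N ≤ normSq (c * z + d) := by
  set g := Int.gcd c N
  set Q := N / g
  have hgN : g ∣ N := by exact_mod_cast Int.gcd_dvd_right c N
  have hQg : Q * g = N := Nat.div_mul_cancel hgN
  have hQ : 0 < Q := Nat.div_pos (Nat.le_of_dvd hN hgN) (Nat.pos_of_dvd_of_pos hgN hN)
  have hNQ : N / Q = g := Nat.div_div_self hgN hN.ne'
  have hQcop : Nat.Coprime Q (N / Q) := hNQ ▸ Nat.coprime_of_squarefree_mul (hQg ▸ hsf)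
  obtain ⟨u, v, huv⟩ := (hsf.isCoprime_div_gcd c).mul_right hcd
  obtain ⟨k, hk⟩ : (g : ℤ) ∣ c := Int.gcd_dvd_left c N
  have hNc : (N : ℤ) ∣ Q * c := ⟨k, by rw [hk, ← hQg]; push_cast; ring⟩
  have hbound := hmax.le_normSq hN hz ⟨g, hQg.symm⟩ hQcop hNc (dvd_mul_right _ v)
    (dvd_mul_right _ d) (b := -u) (by linear_combination (Q : ℤ) * huv)
  have hscale : normSq (((Q * c : ℤ) : ℂ) * z + (Q * d : ℤ)) = Q ^ 2 * normSq (c * z + d) := by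
    rw [← normSq_natCast_mul]
    push_cast
    ring_nf
  rw [hscale] at hbound
  have hQR : (0 : ℝ) < Q := by exact_mod_cast hQ
  have hgN' : (g : ℝ) / N = 1 / Q := by
    rw [← hQg]
    push_cast
    field_simp [(by exact_mod_cast (Nat.pos_of_dvd_of_pos hgN hN) : (0 : ℝ) < g).ne']
  rw [hgN', div_le_iff₀ hQR]
  nlinarith

lemma gcd_div_le_normSq (hmax : IsImMaxOnAtkinLehnerOrbit N z) (hN : 0 < N)
    (hsf : Squarefree N) (hz : 0 < z.im) {c d : ℤ} (hcd : (c, d) ≠ (0, 0)) :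
    (Int.gcd c N : ℝ) / N ≤ normSq (c * z + d) := by
  have hgcd : 0 < Int.gcd c d := Int.gcd_pos_iff.mpr (by
    by_contra! h
    exact hcd (by rw [h.1, h.2]))
  obtain ⟨e, c₁, d₁, he, hcop, rfl, rfl⟩ := Int.exists_gcd_one' hgcd
  have hbound := hmax.gcd_div_le_normSq_of_isCoprime hN hsf hz
    (Int.isCoprime_iff_gcd_eq_one.mpr hcop)
  have hscale : normSq (((c₁ * e : ℤ) : ℂ) * z + (d₁ * e : ℤ)) = e ^ 2 * normSq (c₁ * z + d₁) := by
    rw [← normSq_natCast_mul]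
    push_cast
    ring_nf
  have hgcd_le : (Int.gcd (c₁ * e) N : ℝ) ≤ e * Int.gcd c₁ N := by
    exact_mod_cast Nat.le_of_dvd (Nat.mul_pos he (Int.gcd_pos_of_ne_zero_right _ (by omega)))
      (Int.gcd_mul_natCast_dvd c₁ e N)
  have heR : (1 : ℝ) ≤ e := by exact_mod_cast he
  have hNR : (0 : ℝ) < N := by exact_mod_cast hN
  rw [hscale]
  calc (Int.gcd (c₁ * e) N : ℝ) / N ≤ e * Int.gcd c₁ N / N := by gcongr
    _ ≤ e ^ 2 * (Int.gcd c₁ N / N) := by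
      rw [mul_div_assoc, sq, mul_assoc]
      exact le_mul_of_one_le_left (by positivity) heR
    _ ≤ e ^ 2 * normSq (c₁ * z + d₁) := by gcongr

end IsImMaxOnAtkinLehnerOrbit

lemma sqrt_three_div_two_le_im {w : ℂ} (hw : 0 ≤ w.im) (h : ∀ n : ℤ, 1 ≤ normSq (w - n)) :
    Real.sqrt 3 / 2 ≤ w.im := by
  have hnear := abs_le.mp (abs_sub_round w.re)
  have hdist := h (round w.re)
  rw [normSq_apply] at hdist
  simp only [sub_re, sub_im, intCast_re, intCast_im, sub_zero] at hdist
  rw [div_le_iff₀ two_pos, Real.sqrt_le_iff]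
  constructor <;> nlinarith

/-- Let `N` be squarefree and let `z ∈ ℍ` have maximal imaginary part within its orbit
under the group `A₀(N)` generated by `Γ₀(N)` and the Atkin–Lehner operators (realized by
the integral matrices `[[a,b],[c,d]]` with `N ∣ c`, `Q ∣ a`, `Q ∣ d` and determinant `Q`,
for `Q` an exact divisor of `N`).  Then `Im z ≥ √3/(2N)`, and for every pair of integers
`(c,d) ≠ (0,0)` one has `|cz + d|² ≥ gcd(c,N)/N`. -/
theorem stmt_3 (N : ℕ) (hN : 0 < N) (hsf : Squarefree N)
    (z : ℂ) (hz : 0 < z.im)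
    (hmax : ∀ (a b c d : ℤ) (Q : ℕ), Q ∣ N → Nat.Coprime Q (N / Q) →
      (N : ℤ) ∣ c → (Q : ℤ) ∣ a → (Q : ℤ) ∣ d → a * d - b * c = (Q : ℤ) →
      (moebius a b c d z).im ≤ z.im) :
    Real.sqrt 3 / (2 * N) ≤ z.im ∧
      ∀ c d : ℤ, (c, d) ≠ (0, 0) →
        (Int.gcd c (N : ℤ) : ℝ) / N ≤ Complex.normSq ((c : ℂ) * z + d) := by
  have hmax : IsImMaxOnAtkinLehnerOrbit N z := hmax
  refine ⟨?_, fun c d => hmax.gcd_div_le_normSq hN hsf hz⟩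
  have hNR : (0 : ℝ) < N := by exact_mod_cast hN
  have hNz : Real.sqrt 3 / 2 ≤ ((N : ℂ) * z).im := by
    refine sqrt_three_div_two_le_im (by simpa using (by positivity : 0 ≤ (N : ℝ) * z.im)) ?_
    intro n
    have := hmax.gcd_div_le_normSq hN hsf hz (c := N) (d := -n) (by simp [hN.ne'])
    simpa [div_self hNR.ne', sub_eq_add_neg] using this
  rw [div_le_iff₀ (by positivity)]
  simp only [mul_im, natCast_re, natCast_im, zero_mul, add_zero] at hNz
  linarith
end

section
/- (Van der Corput) Let 𝒦 ⊂ ℝ^d be a closed convex 0-symmetric set and Λ ⊂ ℝ^d a full-rank lattice. Then |𝒦 ∩ Λ| + 1 ≥ 2^{1−d} · vol(𝒦)/covol(Λ), where covol(Λ) is the volume of a fundamental domain of Λ. -/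
/-!
If `N = |K ∩ L|`, every point lies in at most `(N + 1) / 2` of the translates `g + ½K`, `g ∈ L`:
the translation vectors involved form a set `T` with `T - T ⊆ (½K - ½K) ∩ L = K ∩ L`, while
`|T - T| ≥ 2|T| - 1` by Cauchy–Davenport in the torsion-free group `ℝ^d`.
Integrating this multiplicity bound over a fundamental domain of `L` gives
`2^(-d) vol K = vol(½K) ≤ (N + 1) / 2 ⬝ covol L`.
-/

open MeasureTheory Module Set
open scoped ENNReal Pointwise

theorem Set.two_mul_encard_le_encard_sub_add_one {G : Type*} [AddGroup G] [IsAddTorsionFree G]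
    (T : Set G) : 2 * T.encard ≤ (T - T).encard + 1 := by
  classical
  rcases T.eq_empty_or_nonempty with rfl | ⟨t, ht⟩
  · simp
  rcases T.finite_or_infinite with hT | hT
  · lift T to Finset G using hT
    have hT : T.Nonempty := ⟨t, ht⟩
    have hCD := cauchy_davenport_of_isAddTorsionFree hT hT.neg
    rw [Finset.card_neg, ← sub_eq_add_neg] at hCD
    rw [← Finset.coe_sub, encard_coe_eq_coe_finsetCard, encard_coe_eq_coe_finsetCard]
    norm_cast
    omega
  · have hTT : (T - T).Infinite :=
      (hT.image sub_left_injective.injOn).mono (image_subset_iff.2 fun _ hx => sub_mem_sub hx ht)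
    simp [hTT.encard_eq]

theorem Convex.inv_two_smul_sub_inv_two_smul_subset {E : Type*} [AddCommGroup E] [Module ℝ E]
    {K : Set E} (hK : Convex ℝ K) (hsymm : ∀ x ∈ K, -x ∈ K) :
    (2⁻¹ : ℝ) • K - (2⁻¹ : ℝ) • K ⊆ K := by
  rintro _ ⟨_, ⟨a, ha, rfl⟩, _, ⟨b, hb, rfl⟩, rfl⟩
  simpa [sub_eq_add_neg, ← smul_neg] using
    hK ha (hsymm b hb) (inv_nonneg.2 zero_le_two) (inv_nonneg.2 zero_le_two) (by norm_num)

theorem Convex.two_mul_encard_setOf_mem_vadd_inv_two_smul_le {E : Type*} [AddCommGroup E]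
    [Module ℝ E] {K : Set E} (hK : Convex ℝ K) (hsymm : ∀ x ∈ K, -x ∈ K)
    (L : Submodule ℤ E) (x : E) :
    2 * {g : L | x ∈ g +ᵥ (2⁻¹ : ℝ) • K}.encard ≤ (K ∩ L).encard + 1 := by
  have := IsAddTorsionFree.of_isTorsionFree ℝ E
  set T := {g : L | x ∈ g +ᵥ (2⁻¹ : ℝ) • K}
  have hdiff : Subtype.val '' T - Subtype.val '' T ⊆ K ∩ L := by
    rintro _ ⟨_, ⟨g, hg, rfl⟩, _, ⟨h, hh, rfl⟩, rfl⟩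
    rw [mem_ofPred_eq, mem_vadd_set_iff_neg_vadd_mem] at hg hh
    refine ⟨?_, L.sub_mem g.2 h.2⟩
    convert hK.inv_two_smul_sub_inv_two_smul_subset hsymm (sub_mem_sub hh hg) using 1
    simp only [Submodule.vadd_def, vadd_eq_add, NegMemClass.coe_neg]
    abel
  calc 2 * T.encard = 2 * (Subtype.val '' T).encard := by
        rw [Subtype.val_injective.encard_image]
    _ ≤ (Subtype.val '' T - Subtype.val '' T).encard + 1 :=
        two_mul_encard_le_encard_sub_add_one _
    _ ≤ (K ∩ L).encard + 1 := by gcongr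

theorem MeasureTheory.IsAddFundamentalDomain.measure_le_mul_of_encard_le {G α : Type*}
    [AddGroup G] [Countable G] [AddAction G α] [MeasurableSpace α] [MeasurableConstVAdd G α]
    {F s : Set α} {μ : Measure α} [VAddInvariantMeasure G α μ]
    (hF : IsAddFundamentalDomain G F μ) (hs : NullMeasurableSet s μ) {m : ℝ≥0∞}
    (hm : ∀ x, ({g : G | x ∈ g +ᵥ s}.encard : ℝ≥0∞) ≤ m) : μ s ≤ m * μ F := by
  have hmult (x : α) :
      ∑' g : G, (g +ᵥ s).indicator 1 x = ({g : G | x ∈ g +ᵥ s}.encard : ℝ≥0∞) := by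
    rw [← ENNReal.tsum_set_one]
    exact (tsum_subtype _ 1).symm
  have hvadd (g : G) : NullMeasurableSet (g +ᵥ s) (μ.restrict F) :=
    (hs.vadd g).mono Measure.restrict_le_self
  calc μ s = ∑' g : G, μ ((g +ᵥ s) ∩ F) := hF.measure_eq_tsum s
    _ = ∑' g : G, ∫⁻ x in F, (g +ᵥ s).indicator 1 x ∂μ := by
        simp_rw [lintegral_indicator_one₀ (hvadd _), Measure.restrict_apply₀ (hvadd _)]
    _ = ∫⁻ x in F, ∑' g : G, (g +ᵥ s).indicator 1 x ∂μ :=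
        (lintegral_tsum fun g => aemeasurable_one.indicator₀ (hvadd g)).symm
    _ ≤ ∫⁻ _ in F, m ∂μ := lintegral_mono fun x => (hmult x).trans_le (hm x)
    _ = m * μ F := setLIntegral_const F m

theorem ZLattice.two_zpow_mul_measure_le_encard_add_one_mul_covolume {E : Type*}
    [NormedAddCommGroup E] [NormedSpace ℝ E] [FiniteDimensional ℝ E] [MeasurableSpace E]
    [BorelSpace E] (μ : Measure E) [μ.IsAddHaarMeasure] {K : Set E} (hK : Convex ℝ K)
    (hsymm : ∀ x ∈ K, -x ∈ K) (L : Submodule ℤ E) [DiscreteTopology L] [IsZLattice ℝ L] :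
    (2 : ℝ≥0∞) ^ ((1 : ℤ) - finrank ℝ E) * μ K ≤
      ((K ∩ L).encard + 1) * ENNReal.ofReal (covolume L μ) := by
  have : MeasurableVAdd L E := (inferInstance : MeasurableVAdd L.toAddSubgroup E)
  have : VAddInvariantMeasure L E μ :=
    (inferInstance : VAddInvariantMeasure L.toAddSubgroup E μ)
  let F := ZSpan.fundamentalDomain ((Free.chooseBasis ℤ L).ofZLatticeBasis ℝ)
  have hF : IsAddFundamentalDomain L F μ :=
    ZLattice.isAddFundamentalDomain (Free.chooseBasis ℤ L) μ
  have hcovol : ENNReal.ofReal (covolume L μ) = μ F := by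
    rw [covolume_eq_measure_fundamentalDomain L μ hF,
      ofReal_measureReal (ZSpan.fundamentalDomain_isBounded _).measure_lt_top.ne]
  have hhalf : μ ((2⁻¹ : ℝ) • K) ≤ ((K ∩ L).encard + 1) / 2 * μ F := by
    refine hF.measure_le_mul_of_encard_le ((hK.smul _).nullMeasurableSet (μ := μ)) fun x => ?_
    rw [ENNReal.le_div_iff_mul_le (by simp) (by simp), mul_comm]
    exact_mod_cast hK.two_mul_encard_setOf_mem_vadd_inv_two_smul_le hsymm L x
  calc (2 : ℝ≥0∞) ^ ((1 : ℤ) - finrank ℝ E) * μ K = 2 * μ ((2⁻¹ : ℝ) • K) := by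
        rw [Measure.addHaar_smul_of_nonneg μ (by norm_num), ← mul_assoc,
          ENNReal.ofReal_pow (by norm_num), ENNReal.ofReal_inv_of_pos (by norm_num),
          sub_eq_add_neg, ENNReal.zpow_add two_ne_zero ENNReal.ofNat_ne_top, zpow_one,
          ENNReal.zpow_neg, zpow_natCast, ENNReal.inv_pow]
        norm_num
    _ ≤ 2 * (((K ∩ L).encard + 1) / 2 * μ F) := by gcongr
    _ = ((K ∩ L).encard + 1) * ENNReal.ofReal (covolume L μ) := by
        rw [hcovol, ← mul_assoc, ENNReal.mul_div_cancel two_ne_zero ENNReal.ofNat_ne_top]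

theorem stmt_5_general (d : ℕ)
    (K : Set (EuclideanSpace ℝ (Fin d)))
    (hKconv : Convex ℝ K) (hKsymm : ∀ x ∈ K, -x ∈ K)
    (L : Submodule ℤ (EuclideanSpace ℝ (Fin d)))
    [DiscreteTopology L] [IsZLattice ℝ L] :
    (2 : ℝ≥0∞) ^ ((1 : ℤ) - (d : ℤ)) * volume K / ENNReal.ofReal (ZLattice.covolume L) ≤
      (∑' _ : ↥(K ∩ (L : Set (EuclideanSpace ℝ (Fin d)))), (1 : ℝ≥0∞)) + 1 := by
  have hpos : 0 < ZLattice.covolume L := ZLattice.covolume_pos L volume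
  rw [ENNReal.tsum_set_one,
    ENNReal.div_le_iff (ENNReal.ofReal_pos.2 hpos).ne' ENNReal.ofReal_ne_top]
  have := ZLattice.two_zpow_mul_measure_le_encard_add_one_mul_covolume volume hKconv hKsymm L
  rwa [finrank_euclideanSpace_fin] at this

/-- **Van der Corput's theorem.** For a closed convex `0`-symmetric set `𝒦 ⊆ ℝ^d` and a
full-rank lattice `L ⊆ ℝ^d`, one has `|𝒦 ∩ L| + 1 ≥ 2^(1-d) ⬝ vol(𝒦) / covol(L)`.
The number of lattice points is counted in `ℝ≥0∞` (so that an infinite intersection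
poses no problem). -/
theorem stmt_5 (d : ℕ) (hd : 0 < d)
    (K : Set (EuclideanSpace ℝ (Fin d))) (hKclosed : IsClosed K)
    (hKconv : Convex ℝ K) (hKsymm : ∀ x ∈ K, -x ∈ K)
    (L : Submodule ℤ (EuclideanSpace ℝ (Fin d)))
    [DiscreteTopology L] [IsZLattice ℝ L] :
    (2 : ℝ≥0∞) ^ ((1 : ℤ) - (d : ℤ)) * volume K / ENNReal.ofReal (ZLattice.covolume L) ≤
      (∑' _ : ↥(K ∩ (L : Set (EuclideanSpace ℝ (Fin d)))), (1 : ℝ≥0∞)) + 1 :=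
  stmt_5_general d K hKconv hKsymm L
end

section
/- Let 𝔬 be an order in a real quadratic field with maximal order 𝔬_max, and let η > 1 be the fundamental norm-one unit of 𝔬_max (generator of the infinite part of the norm-one unit group). Then for every integer ℓ ≥ 1 and every choice of sign, Nr(1 ± η^ℓ) ≥ (1/4)·1.618^ℓ, where Nr denotes the field norm. -/
/-- Let `𝔬_max` be the maximal order of a real quadratic field `K` (with nontrivial
automorphism `σ`, norm `ν x = x σ(x) ∈ ℚ`, and a real embedding `ι`), and let `η > 1` be
the fundamental norm-one unit of `𝔬_max` (the smallest norm-one unit of `𝔬_max` that is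
`> 1` under `ι`).  Then for every `ℓ ≥ 1` and every sign, `|Nr(1 ± η^ℓ)| ≥ ¼ ⬝ 1.618^ℓ`. -/
theorem stmt_9 (K : Type*) [Field K] [Algebra ℚ K]
    (hdim : Module.finrank ℚ K = 2)
    (σ : K ≃ₐ[ℚ] K) (hσ : σ ≠ AlgEquiv.refl) (hσ2 : ∀ x, σ (σ x) = x)
    (ν : K → ℚ) (hν : ∀ x, algebraMap ℚ K (ν x) = x * σ x)
    (ι : K →+* ℝ)
    (η : K) (hη : η ∈ integralClosure ℤ K) (hη' : σ η ∈ integralClosure ℤ K)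
    (hηnorm : ν η = 1) (hηgt : 1 < ι η)
    (hfund : ∀ u : K, u ∈ integralClosure ℤ K → σ u ∈ integralClosure ℤ K →
      ν u = 1 → 1 < ι u → ι η ≤ ι u) :
    ∀ ℓ : ℕ, 1 ≤ ℓ → ∀ e : K, e = 1 ∨ e = -1 →
      (1 / 4 : ℝ) * 1.618 ^ ℓ ≤ |(ν (1 + e * η ^ ℓ) : ℝ)| := by
  intro ℓ hℓ e he
  have hinj : Function.Injective (algebraMap ℚ K) := (algebraMap ℚ K).injective
  have key : ∀ r : ℚ, ι (algebraMap ℚ K r) = (r : ℝ) := fun r => by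
    rw [eq_ratCast (algebraMap ℚ K) r, map_ratCast]
  have hmul : η * σ η = 1 := by
    have h := hν η
    rw [hηnorm, map_one] at h
    exact h.symm
  set s := ι η with hs
  have hs1 : (1:ℝ) < s := hηgt
  have hs0 : (0:ℝ) < s := by linarith
  have hσι : ι (σ η) = s⁻¹ := by
    have h : ι (σ η) * s = 1 := by rw [mul_comm, ← map_mul, hmul, map_one]
    exact eq_inv_of_mul_eq_one_left h
  -- the trace is a rational number
  have htr : algebraMap ℚ K (ν (1 + η) - 2) = η + σ η := by
    have h2 : algebraMap ℚ K (2 : ℚ) = 2 := map_ofNat _ 2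
    rw [map_sub, hν, h2, map_add, map_one]
    linear_combination hmul
  -- it is an algebraic integer, hence an integer
  have hint : IsIntegral ℤ (ν (1 + η) - 2 : ℚ) := by
    have h : IsIntegral ℤ (η + σ η) := (integralClosure ℤ K).add_mem hη hη'
    rw [← htr] at h
    exact (isIntegral_algebraMap_iff hinj).mp h
  obtain ⟨z, hz⟩ := IsIntegrallyClosed.isIntegral_iff.mp hint
  have htrR : s + s⁻¹ = (z : ℝ) := by
    have h1 := key (ν (1 + η) - 2)
    rw [htr, map_add, hσι] at h1
    rw [h1, ← hz]
    simp
  have hss : s * s⁻¹ = 1 := mul_inv_cancel₀ (ne_of_gt hs0)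
  have hsq : s * s + 1 = (z : ℝ) * s := by
    have h := congrArg (fun x => x * s) htrR
    simp only [add_mul] at h
    rw [inv_mul_cancel₀ (ne_of_gt hs0)] at h
    linarith [h]
  have hz3 : (3 : ℝ) ≤ (z : ℝ) := by
    have h2 : (2 : ℝ) < (z : ℝ) := by nlinarith [sq_nonneg (s - 1)]
    have : (2 : ℤ) < z := by exact_mod_cast h2
    exact_mod_cast this
  have hsb : (2.618 : ℝ) ≤ s := by
    by_contra h
    push_neg at h
    nlinarith [mul_pos (by linarith : (0:ℝ) < s - 1) (by linarith : (0:ℝ) < 2.618 - s),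
      mul_le_mul_of_nonneg_right hz3 (le_of_lt hs0)]
  -- powers
  set u := s ^ ℓ with hu
  have hu0 : (0:ℝ) < u := pow_pos hs0 ℓ
  have huinv : u * u⁻¹ = 1 := mul_inv_cancel₀ (ne_of_gt hu0)
  have hub : (2.618 : ℝ) ^ ℓ ≤ u := pow_le_pow_left₀ (by norm_num) hsb ℓ
  have hub1 : (2.618 : ℝ) ≤ u := le_trans hsb (le_self_pow₀ (by linarith) (by omega))
  have h1618 : (1.618 : ℝ) ^ ℓ ≤ (2.618 : ℝ) ^ ℓ :=
    pow_le_pow_left₀ (by norm_num) (by norm_num) ℓ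
  have hA0 : (1.618 : ℝ) ≤ (1.618 : ℝ) ^ ℓ := le_self_pow₀ (by norm_num) (by omega)
  have hAsq : ((1.618 : ℝ) ^ ℓ) ^ 2 ≤ (2.618 : ℝ) ^ ℓ := by
    calc ((1.618 : ℝ) ^ ℓ) ^ 2 = ((1.618 : ℝ) ^ 2) ^ ℓ := by
          rw [← pow_mul, ← pow_mul, mul_comm]
      _ ≤ (2.618 : ℝ) ^ ℓ := pow_le_pow_left₀ (by positivity) (by norm_num) ℓ
  -- computation of the norm
  have hσe : σ e = e := by rcases he with rfl | rfl <;> simp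
  have hσy : σ (1 + e * η ^ ℓ) = 1 + e * (σ η) ^ ℓ := by
    rw [map_add, map_one, map_mul, map_pow, hσe]
  have hν' : ((ν (1 + e * η ^ ℓ) : ℚ) : ℝ) = (1 + ι e * u) * (1 + ι e * u⁻¹) := by
    rw [← key, hν, hσy, map_mul, map_add, map_add, map_one, map_mul, map_mul,
      map_pow, map_pow, hσι, inv_pow]
  rcases he with rfl | rfl
  · rw [hν', map_one]
    have hval : (1 + 1 * u) * (1 + 1 * u⁻¹) = 2 + u + u⁻¹ := by
      field_simp
      ring
    rw [hval, abs_of_pos (by positivity)]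
    nlinarith [inv_pos.mpr hu0]
  · rw [hν']
    have hι1 : ι (-1 : K) = -1 := by simp
    rw [hι1]
    have hval : (1 + -1 * u) * (1 + -1 * u⁻¹) = 2 - u - u⁻¹ := by
      field_simp
      ring
    rw [hval]
    have hinvlt : u⁻¹ < 1 := by
      rw [inv_lt_one_iff₀]; right; linarith
    have hneg : 2 - u - u⁻¹ < 0 := by
      have : u⁻¹ > 0 := inv_pos.mpr hu0
      linarith
    rw [abs_of_neg hneg]
    -- need (1/4) * 1.618^ℓ ≤ u + u⁻¹ - 2, with u ≥ (1.618^ℓ)^2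
    have hA := hA0
    nlinarith [inv_pos.mpr hu0, hAsq, hub]
end

section
/- Identify the real quaternion algebra B_∞ with coordinates [a,b,c] + d = a𝐢 + b𝐣 + c𝐤 + d, where 𝐢² = −1, 𝐣² = ±1 (+1 in the indefinite case, −1 in the definite case), 𝐤 = 𝐢𝐣, and set P([a,b,c]+d) = a² + b² + c² + d². For T > 0 and δ ∈ (0,1], let Ω(δ,T) be the set of elements with P ≤ T² and b² + c² ≤ δT². Then for all 0 < δ ≤ 1 and all x, y ∈ Ω(δ,T), the commutator [x,y] = xy − yx satisfies |q([x,y])| ≪ δT⁴ and P([x,y]) ≪ δT⁴, where q is the reduced norm and the implied constants are absolute. -/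
/-!
The commutator of two quaternions is pure, and its coordinates are (up to the signs and the factor
`ε` of the algebra) twice the cross product of their imaginary parts. Every coordinate of that cross
product involves one of the coordinates `b, c` of `x` or of `y`, so its square is at most a multiple
of `u(x) P(y) + P(x) u(y) ≤ 2δT⁴`. Finally `|q| ≤ P` on the whole algebra because `ε = ±1`.
-/

open Quaternion

namespace Stmt11

variable (ε : ℝ)

/-- `P([a,b,c]+d) = a² + b² + c² + d²`. -/
def P (γ : ℍ[ℝ, -1, ε]) : ℝ := γ.imI ^ 2 + γ.imJ ^ 2 + γ.imK ^ 2 + γ.re ^ 2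

/-- `u([a,b,c]+d) = b² + c²`. -/
def u (γ : ℍ[ℝ, -1, ε]) : ℝ := γ.imJ ^ 2 + γ.imK ^ 2

/-- The reduced norm `q(γ) = γ ⬝ star γ` (a scalar). -/
def q (γ : ℍ[ℝ, -1, ε]) : ℝ := (γ * star γ).re

/-- `Ω(δ,T)` is the set of `[a,b,c]+d` with `a²+b²+c²+d² ≤ T²` and `b²+c² ≤ δT²`. -/
def Omega (δ T : ℝ) : Set ℍ[ℝ, -1, ε] := {γ | P ε γ ≤ T ^ 2 ∧ u ε γ ≤ δ * T ^ 2}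

end Stmt11

namespace QuaternionAlgebra

variable {R : Type*} [CommRing R] {c₁ c₂ : R} (x y : ℍ[R, c₁, c₂])

theorem re_commutator : (x * y - y * x).re = 0 := by
  simp only [re_sub, re_mul]; ring

theorem imI_commutator : (x * y - y * x).imI = 2 * c₂ * (x.imK * y.imJ - x.imJ * y.imK) := by
  simp only [imI_sub, imI_mul]; ring

theorem imJ_commutator : (x * y - y * x).imJ = 2 * c₁ * (x.imI * y.imK - x.imK * y.imI) := by
  simp only [imJ_sub, imJ_mul]; ring

theorem imK_commutator : (x * y - y * x).imK = 2 * (x.imI * y.imJ - x.imJ * y.imI) := by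
  simp only [imK_sub, imK_mul]; ring

theorem re_mul_star (γ : ℍ[R, c₁, c₂]) :
    (γ * star γ).re = γ.re ^ 2 - c₁ * γ.imI ^ 2 - c₂ * (γ.imJ ^ 2 - c₁ * γ.imK ^ 2) := by
  simp only [re_mul, re_star, imI_star, imJ_star, imK_star]; ring

end QuaternionAlgebra

theorem cross_sq_sum_le (a b c a' b' c' : ℝ) :
    (b * c' - c * b') ^ 2 + (a * c' - c * a') ^ 2 + (a * b' - b * a') ^ 2 ≤
      2 * ((a ^ 2 + b ^ 2 + c ^ 2) * (b' ^ 2 + c' ^ 2) + a' ^ 2 * (b ^ 2 + c ^ 2)) := by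
  nlinarith [sq_nonneg (b * c' + c * b'), sq_nonneg (a * c' + c * a'), sq_nonneg (a * b' + b * a'),
    sq_nonneg (b * b'), sq_nonneg (c * c')]

namespace Stmt11

variable {ε : ℝ}

theorem q_eq (γ : ℍ[ℝ, -1, ε]) : q ε γ = γ.re ^ 2 + γ.imI ^ 2 - ε * u ε γ := by
  rw [q, QuaternionAlgebra.re_mul_star, u]; ring

theorem P_eq (γ : ℍ[ℝ, -1, ε]) : P ε γ = γ.re ^ 2 + γ.imI ^ 2 + u ε γ := by
  rw [P, u]; ring

theorem u_nonneg (γ : ℍ[ℝ, -1, ε]) : 0 ≤ u ε γ := by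
  unfold u; positivity

theorem abs_q_le_P (hε : |ε| ≤ 1) (γ : ℍ[ℝ, -1, ε]) : |q ε γ| ≤ P ε γ := by
  have hεu : |ε * u ε γ| ≤ u ε γ := by
    rw [abs_mul, abs_of_nonneg (u_nonneg γ)]
    exact mul_le_of_le_one_left (u_nonneg γ) hε
  rw [q_eq, P_eq]
  rw [abs_le] at hεu ⊢
  constructor <;> nlinarith [sq_nonneg γ.re, sq_nonneg γ.imI]

theorem P_commutator_le (hε : |ε| ≤ 1) (x y : ℍ[ℝ, -1, ε]) :
    P ε (x * y - y * x) ≤ 8 * (P ε x * u ε y + P ε y * u ε x) := by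
  have hε2 : ε ^ 2 ≤ 1 := (sq_le_one_iff_abs_le_one ε).mpr hε
  have hcross := cross_sq_sum_le x.imI x.imJ x.imK y.imI y.imJ y.imK
  rw [P, QuaternionAlgebra.re_commutator, QuaternionAlgebra.imI_commutator,
    QuaternionAlgebra.imJ_commutator, QuaternionAlgebra.imK_commutator, P, P, u, u]
  nlinarith [mul_le_mul_of_nonneg_right hε2 (sq_nonneg (x.imJ * y.imK - x.imK * y.imJ)),
    mul_nonneg (sq_nonneg x.re) (add_nonneg (sq_nonneg y.imJ) (sq_nonneg y.imK)),
    mul_nonneg (sq_nonneg y.re) (add_nonneg (sq_nonneg x.imJ) (sq_nonneg x.imK))]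

theorem P_commutator_le_of_mem_Omega (hε : |ε| ≤ 1) {δ T : ℝ} {x y : ℍ[ℝ, -1, ε]}
    (hx : x ∈ Omega ε δ T) (hy : y ∈ Omega ε δ T) :
    P ε (x * y - y * x) ≤ 16 * δ * T ^ 4 := by
  obtain ⟨hPx, hux⟩ := hx
  obtain ⟨hPy, huy⟩ := hy
  have hxy : P ε x * u ε y ≤ T ^ 2 * (δ * T ^ 2) :=
    mul_le_mul hPx huy (u_nonneg y) (sq_nonneg T)
  have hyx : P ε y * u ε x ≤ T ^ 2 * (δ * T ^ 2) :=
    mul_le_mul hPy hux (u_nonneg x) (sq_nonneg T)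
  calc P ε (x * y - y * x) ≤ 8 * (P ε x * u ε y + P ε y * u ε x) := P_commutator_le hε x y
    _ ≤ 8 * (T ^ 2 * (δ * T ^ 2) + T ^ 2 * (δ * T ^ 2)) := by gcongr
    _ = 16 * δ * T ^ 4 := by ring

/-- For `x, y ∈ Ω(δ,T)` in the real quaternion algebra `B_∞` (split or definite), the
commutator `[x,y] = xy − yx` satisfies `|q([x,y])| ≪ δT⁴` and `P([x,y]) ≪ δT⁴`, with
absolute implied constants. -/
theorem stmt_11 :
    ∃ C : ℝ, 0 < C ∧
      ∀ (ε : ℝ), (ε = 1 ∨ ε = -1) →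
      ∀ (δ T : ℝ), 0 < δ → δ ≤ 1 → 0 < T →
      ∀ x y : ℍ[ℝ, -1, ε], x ∈ Omega ε δ T → y ∈ Omega ε δ T →
        |q ε (x * y - y * x)| ≤ C * δ * T ^ 4 ∧
          P ε (x * y - y * x) ≤ C * δ * T ^ 4 := by
  refine ⟨16, by norm_num, fun ε hε δ T _ _ _ x y hx hy => ?_⟩
  have hε : |ε| ≤ 1 := by rcases hε with rfl | rfl <;> norm_num
  have hP := P_commutator_le_of_mem_Omega hε hx hy
  exact ⟨(abs_q_le_P hε _).trans hP, hP⟩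

end Stmt11
end

section
/- Let N be squarefree, R = [[ℤ, ℤ],[Nℤ, ℤ]] the standard Eichler order of level N in Mat₂(ℚ), ℓ | N, and R(ℓ)⁰ = { [[a, b/ℓ],[cN/ℓ, −a]] : a, b, c ∈ ℤ } the trace-zero part of the partially dualized lattice. Let g ∈ SL₂(ℝ) be such that z = g·i = x + iy ∈ ℍ has maximal imaginary part under the Atkin–Lehner group A₀(N), so the normalized height satisfies H(g) = y. Let λ₁ be the first successive minimum of the convex body Ω(δ,1) ∩ B_∞⁰ on the lattice g^{-1}R(ℓ)⁰g. Then λ₁ ≫ min{ℓ^{-1/2}, ℓ^{-1}·δ^{-1/2}·y^{-1}}. -/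
/-!
Write `z = g·i = x + iy` and let `ξ = [[A, B], [C, −A]] ∈ R(ℓ)⁰`, so `A = a`, `B = b/ℓ`, `C = cN/ℓ`.
Up to a rotation, which preserves `P` and `u`, conjugating by `g` is conjugating by the upper
triangular matrix taking `i` to `z`, which gives `[[A − Cx, (2Ax + B − Cx²)/y], [Cy, Cx − A]]`.
So the body bounds `(A − Cx)²` by `u` and `(Cy)²` by `2P`.

If `(a, c) ≠ 0`, these are `ℓ⁻²` times the two terms of `|cNz − aℓ|²`, which is at least `ℓ` by the
spacing lemma `|cz + d|² ≥ gcd(c, N)/N` for coprime `c, d`: with `Q = N / gcd(c, N)` and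
`αQd + βc = 1`, the matrix `[[Qα, −β], [Qc, Qd]]` lies in `A₀(N)`, and maximality of `Im z` under
it says `Q |cz + d|² ≥ 1`. This gives `λ₁ ≫ ℓ^(−1/2)`. If `a = c = 0` then `b ≠ 0` and
`u = (b/(2ℓy))²`, which gives `λ₁ ≫ ℓ⁻¹ δ^(−1/2) y⁻¹`.
-/

open Complex

namespace Stmt14

/-- Coordinates `[a,b,c] + d ↦ [[d+c, b+a],[b−a, d−c]]` on `Mat₂(ℝ)`:
`P = a² + b² + c² + d²` (half the squared Frobenius norm). -/
noncomputable def P (M : Matrix (Fin 2) (Fin 2) ℝ) : ℝ :=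
  ((M 0 1 - M 1 0) / 2) ^ 2 + ((M 0 1 + M 1 0) / 2) ^ 2 +
    ((M 0 0 - M 1 1) / 2) ^ 2 + ((M 0 0 + M 1 1) / 2) ^ 2

/-- `u = b² + c²` in the coordinates above. -/
noncomputable def u (M : Matrix (Fin 2) (Fin 2) ℝ) : ℝ :=
  ((M 0 1 + M 1 0) / 2) ^ 2 + ((M 0 0 - M 1 1) / 2) ^ 2

/-- The trace-zero part of the partially dualized Eichler order,
`R(ℓ)⁰ = {[[a, b/ℓ],[cN/ℓ, −a]] : a, b, c ∈ ℤ}`, conjugated by `g`. -/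
noncomputable def lattice (N ℓ : ℕ) (g : Matrix (Fin 2) (Fin 2) ℝ) :
    Set (Matrix (Fin 2) (Fin 2) ℝ) :=
  {v | ∃ a b c : ℤ, v = g⁻¹ * !![(a : ℝ), (b : ℝ) / ℓ; (c : ℝ) * N / ℓ, -(a : ℝ)] * g}

/-- `Im z` is maximal on the orbit of `z` under the Atkin–Lehner group `A₀(N)`. -/
def IsHeightMaximal (N : ℕ) (z : ℂ) : Prop :=
  ∀ (a b c d : ℤ) (Q : ℕ), Q ∣ N → Nat.Coprime Q (N / Q) →
    (N : ℤ) ∣ c → (Q : ℤ) ∣ a → (Q : ℤ) ∣ d → a * d - b * c = (Q : ℤ) →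
    ((((a : ℂ) * z + b) / ((c : ℂ) * z + d)).im ≤ z.im)

lemma im_mul_add_div_mul_add (a b c d : ℤ) (z : ℂ) :
    (((a : ℂ) * z + b) / ((c : ℂ) * z + d)).im =
      (a * d - b * c : ℤ) * z.im / normSq (c * z + d) := by
  rw [div_im]
  simp
  ring

lemma normSq_mul_add_pos {c d : ℤ} {z : ℂ} (hz : z.im ≠ 0) (hcd : c ≠ 0 ∨ d ≠ 0) :
    0 < normSq (c * z + d) := by
  refine normSq_pos.2 fun h ↦ ?_
  have him := congrArg im h
  have hre := congrArg re h
  simp [hz] at him hre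
  simp_all

lemma isCoprime_div_gcd {N : ℕ} (hN : Squarefree N) (c : ℤ) :
    IsCoprime ((N / Int.gcd c N : ℕ) : ℤ) c := by
  set n := Int.gcd c N
  have hnN : n ∣ N := by exact_mod_cast Int.gcd_dvd_right c N
  have hcop : Nat.Coprime (N / n) n :=
    Nat.coprime_of_squarefree_mul (by rwa [Nat.div_mul_cancel hnN])
  rw [Int.isCoprime_iff_gcd_eq_one]
  have hQ : Int.gcd (N / n : ℕ) c ∣ N / n := by exact_mod_cast Int.gcd_dvd_left (N / n : ℕ) c
  have hn : Int.gcd (N / n : ℕ) c ∣ n :=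
    Int.dvd_gcd (Int.gcd_dvd_right ..) ((Int.natCast_dvd_natCast.2 hQ).trans
      (Int.natCast_dvd_natCast.2 (Nat.div_dvd_of_dvd hnN)))
  exact (Nat.Coprime.coprime_dvd_left hQ hcop).eq_one_of_dvd hn

theorem gcd_div_le_normSq {N : ℕ} (hN : Squarefree N) {z : ℂ} (hz : 0 < z.im)
    (hmax : IsHeightMaximal N z) {c d : ℤ} (hcd : IsCoprime c d) :
    (Int.gcd c N : ℝ) / N ≤ normSq (c * z + d) := by
  set n := Int.gcd c N
  set Q := N / n
  have hnN : n ∣ N := by exact_mod_cast Int.gcd_dvd_right c N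
  have hQn : Q * n = N := Nat.div_mul_cancel hnN
  have hN0 : N ≠ 0 := hN.ne_zero
  obtain ⟨α, β, hαβ⟩ := (isCoprime_div_gcd hN c).mul_left hcd.symm
  have hdet : (Q * α) * (Q * d) - (-β) * (Q * c) = (Q : ℤ) := by
    linear_combination (Q : ℤ) * hαβ
  have hcN : (N : ℤ) ∣ Q * c := by
    rw [← hQn]; push_cast; exact mul_dvd_mul_left _ (Int.gcd_dvd_left c N)
  have him := hmax _ _ _ _ Q (Dvd.intro n hQn)
    (by rw [Nat.div_div_self hnN hN0]; exact Nat.coprime_of_squarefree_mul (hQn ▸ hN))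
    hcN (dvd_mul_right _ _) (dvd_mul_right _ _) hdet
  have hn0 : n ≠ 0 := fun h ↦ hN0 (by rw [← hQn, h, mul_zero])
  have hQ : (0 : ℝ) < Q :=
    Nat.cast_pos.2 (Nat.pos_of_ne_zero fun h ↦ hN0 (by rw [← hQn, h, zero_mul]))
  have hS : 0 < normSq (c * z + d) := normSq_mul_add_pos hz.ne' hcd.ne_zero_or_ne_zero
  have hden : ((Q * c : ℤ) : ℂ) * z + (Q * d : ℤ) = (Q : ℂ) * (c * z + d) := by push_cast; ring
  rw [im_mul_add_div_mul_add, hdet, hden, normSq_mul, normSq_natCast,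
    div_le_iff₀ (by positivity)] at him
  push_cast at him
  have hQS : 1 ≤ Q * normSq (c * z + d) := by nlinarith [mul_pos hQ hz]
  calc (n : ℝ) / N = (Q : ℝ)⁻¹ := by rw [← hQn]; push_cast; field_simp
    _ ≤ normSq (c * z + d) := (inv_le_iff_one_le_mul₀' hQ).2 hQS

theorem le_normSq_of_dvd {N ℓ : ℕ} (hN : Squarefree N) (hℓ : ℓ ∣ N) {z : ℂ} (hz : 0 < z.im)
    (hmax : IsHeightMaximal N z) {c d : ℤ} (hc : (N : ℤ) ∣ c) (hd : (ℓ : ℤ) ∣ d)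
    (hcd : c ≠ 0 ∨ d ≠ 0) :
    (ℓ : ℝ) ≤ normSq (c * z + d) := by
  have hg : 0 < Int.gcd c d := Int.gcd_pos_iff.2 hcd
  have hℓg : ℓ ≤ Int.gcd c d :=
    Nat.le_of_dvd hg (Int.dvd_gcd ((Int.natCast_dvd_natCast.2 hℓ).trans hc) hd)
  obtain ⟨c₁, d₁, hcop, hc₁, hd₁⟩ := Int.exists_gcd_one hg
  set g := Int.gcd c d
  have hNgn : N ≤ g * Int.gcd c₁ N := by
    refine Nat.le_of_dvd (Nat.mul_pos hg ?_) ?_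
    · exact Int.gcd_pos_iff.2 (Or.inr (by exact_mod_cast hN.ne_zero))
    · have := Int.dvd_gcd hc (dvd_mul_right (N : ℤ) g)
      rwa [hc₁, Int.gcd_mul_right, Int.natAbs_natCast, mul_comm] at this
  have hexp : (c : ℂ) * z + d = (g : ℂ) * (c₁ * z + d₁) := by
    rw [hc₁, hd₁]; push_cast; ring
  rw [hexp, normSq_mul, normSq_natCast]
  have hN0 : (0 : ℝ) < N := by exact_mod_cast Nat.pos_of_ne_zero hN.ne_zero
  calc (ℓ : ℝ) ≤ g * (g * Int.gcd c₁ N) / N := by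
        rw [le_div_iff₀ hN0]; exact_mod_cast Nat.mul_le_mul hℓg hNgn
    _ = g * g * (Int.gcd c₁ N / N) := by ring
    _ ≤ _ := by
        gcongr
        exact gcd_div_le_normSq hN hz hmax (Int.isCoprime_iff_gcd_eq_one.2 hcop)

/-- The matrix with bottom row `(r, s)` that maps `i` to `x + iy`. -/
def liftOfBottomRow (x y r s : ℝ) : Matrix (Fin 2) (Fin 2) ℝ :=
  !![x * r + y * s, x * s - y * r; r, s]

lemma det_liftOfBottomRow (x y r s : ℝ) : (liftOfBottomRow x y r s).det = y * (r ^ 2 + s ^ 2) := by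
  rw [liftOfBottomRow, Matrix.det_fin_two_of]; ring

lemma exists_eq_of_eq_div {g : Matrix (Fin 2) (Fin 2) ℝ} (hdet : g.det = 1) {z : ℂ}
    (hz : z = ((g 0 0 : ℂ) * I + g 0 1) / ((g 1 0 : ℂ) * I + g 1 1)) :
    ∃ r s : ℝ, g = liftOfBottomRow z.re z.im r s := by
  have hden : (g 1 0 : ℂ) * I + g 1 1 ≠ 0 := by
    intro h
    have h0 : g 1 0 = 0 := by simpa using congrArg im h
    have h1 : g 1 1 = 0 := by simpa using congrArg re h
    simp [Matrix.det_fin_two, h0, h1] at hdet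
  rw [eq_div_iff hden] at hz
  have hre := congrArg re hz
  have him := congrArg im hz
  simp only [mul_re, mul_im, add_re, add_im, ofReal_re, ofReal_im, I_re, I_im] at hre him
  refine ⟨g 1 0, g 1 1, ?_⟩
  ext i j
  fin_cases i <;> fin_cases j <;> simp [liftOfBottomRow] <;> linarith

section Conjugation

variable {x y r s : ℝ}

lemma u_conj (hdet : y * (r ^ 2 + s ^ 2) = 1) (A B C : ℝ) :
    u ((liftOfBottomRow x y r s)⁻¹ * !![A, B; C, -A] * liftOfBottomRow x y r s) =
      (A - C * x) ^ 2 + ((2 * A * x + B - C * x ^ 2 + C * y ^ 2) / (2 * y)) ^ 2 := by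
  have hy : y ≠ 0 := left_ne_zero_of_mul_eq_one hdet
  rw [Matrix.inv_def, det_liftOfBottomRow, hdet, liftOfBottomRow, Matrix.adjugate_fin_two_of]
  simp [u]
  field_simp
  linear_combination (y * (r ^ 2 + s ^ 2) + 1) *
    (4 * y ^ 2 * (A - C * x) ^ 2 + (2 * A * x + B - C * x ^ 2 + C * y ^ 2) ^ 2) * hdet

lemma P_conj (hdet : y * (r ^ 2 + s ^ 2) = 1) (A B C : ℝ) :
    P ((liftOfBottomRow x y r s)⁻¹ * !![A, B; C, -A] * liftOfBottomRow x y r s) =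
      (A - C * x) ^ 2 + ((2 * A * x + B - C * x ^ 2 + C * y ^ 2) / (2 * y)) ^ 2 +
        ((2 * A * x + B - C * x ^ 2 - C * y ^ 2) / (2 * y)) ^ 2 := by
  have hy : y ≠ 0 := left_ne_zero_of_mul_eq_one hdet
  rw [Matrix.inv_def, det_liftOfBottomRow, hdet, liftOfBottomRow, Matrix.adjugate_fin_two_of]
  simp [P]
  field_simp
  linear_combination (y * (r ^ 2 + s ^ 2) + 1) * (4 * y ^ 2 * (A - C * x) ^ 2 +
    (2 * A * x + B - C * x ^ 2 + C * y ^ 2) ^ 2 +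
    (2 * A * x + B - C * x ^ 2 - C * y ^ 2) ^ 2) * hdet

lemma sq_sub_mul_le_u_conj (hdet : y * (r ^ 2 + s ^ 2) = 1) (A B C : ℝ) :
    (A - C * x) ^ 2 ≤
      u ((liftOfBottomRow x y r s)⁻¹ * !![A, B; C, -A] * liftOfBottomRow x y r s) := by
  rw [u_conj hdet]
  exact le_add_of_nonneg_right (sq_nonneg _)

lemma sq_mul_le_two_mul_P_conj (hdet : y * (r ^ 2 + s ^ 2) = 1) (A B C : ℝ) :
    (C * y) ^ 2 ≤
      2 * P ((liftOfBottomRow x y r s)⁻¹ * !![A, B; C, -A] * liftOfBottomRow x y r s) := by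
  set p := (2 * A * x + B - C * x ^ 2 + C * y ^ 2) / (2 * y)
  set q := (2 * A * x + B - C * x ^ 2 - C * y ^ 2) / (2 * y)
  have hy : y ≠ 0 := left_ne_zero_of_mul_eq_one hdet
  have hCy : C * y = p - q := by simp only [p, q]; field_simp; ring
  rw [P_conj hdet, hCy]
  nlinarith [sq_nonneg (p + q), sq_nonneg (A - C * x)]

end Conjugation

lemma half_inv_le_of_one_le_sq {T lam : ℝ} (hT : 0 < T) (hlam : 0 < lam)
    (h : 1 ≤ (2 * T * lam) ^ 2) : 2⁻¹ * T⁻¹ ≤ lam := by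
  rw [← mul_inv, inv_le_iff_one_le_mul₀' (by positivity)]
  exact (one_le_sq_iff₀ (by positivity)).1 h

lemma half_inv_sqrt_le_of_ne_zero {N ℓ : ℕ} (hN : Squarefree N) (hℓN : ℓ ∣ N) {z : ℂ}
    (hz : 0 < z.im) (hmax : IsHeightMaximal N z) {δ lam : ℝ} (hδ1 : δ ≤ 1) (hlam : 0 < lam)
    {a c : ℤ} (hac : a ≠ 0 ∨ c ≠ 0) (hK : ((a : ℝ) - c * N / ℓ * z.re) ^ 2 ≤ δ * lam ^ 2)
    (hD : ((c : ℝ) * N / ℓ * z.im) ^ 2 ≤ 2 * lam ^ 2) :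
    2⁻¹ * (√ℓ)⁻¹ ≤ lam := by
  have hℓ0 : ℓ ≠ 0 := fun h ↦ hN.ne_zero (Nat.eq_zero_of_zero_dvd (h ▸ hℓN))
  have hℓ : (0 : ℝ) < ℓ := Nat.cast_pos.2 (Nat.pos_of_ne_zero hℓ0)
  have hcd : c * N ≠ 0 ∨ -(a * ℓ) ≠ 0 := by
    rcases hac with ha | hc
    · exact Or.inr (neg_ne_zero.2 (mul_ne_zero ha (by exact_mod_cast hℓ0)))
    · exact Or.inl (mul_ne_zero hc (by exact_mod_cast hN.ne_zero))
  have hsp := le_normSq_of_dvd hN hℓN hz hmax (dvd_mul_left _ c) ((dvd_mul_left _ a).neg_right) hcd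
  set K := (a : ℝ) - c * N / ℓ * z.re
  set D := (c : ℝ) * N / ℓ * z.im
  have hexp : normSq (((c * N : ℤ) : ℂ) * z + ((-(a * ℓ) : ℤ) : ℂ)) = ℓ ^ 2 * (K ^ 2 + D ^ 2) := by
    rw [normSq_apply]; simp [K, D]; field_simp; ring
  rw [hexp] at hsp
  have hKD : 1 ≤ ℓ * (K ^ 2 + D ^ 2) := by nlinarith
  apply half_inv_le_of_one_le_sq (Real.sqrt_pos.2 hℓ) hlam
  rw [mul_pow, mul_pow, Real.sq_sqrt hℓ.le]
  nlinarith

lemma half_inv_le_of_ne_zero {ℓ y δ lam : ℝ} {b : ℤ} (hb : b ≠ 0) (hℓ : 0 < ℓ) (hy : 0 < y)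
    (hδ : 0 < δ) (hlam : 0 < lam) (hu : (b / ℓ / (2 * y)) ^ 2 ≤ δ * lam ^ 2) :
    2⁻¹ * (ℓ * √δ * y)⁻¹ ≤ lam := by
  apply half_inv_le_of_one_le_sq (by positivity) hlam
  have hb1 : (1 : ℝ) ≤ (b : ℝ) ^ 2 := by
    rw [one_le_sq_iff_one_le_abs, ← Int.cast_abs]; exact_mod_cast Int.one_le_abs hb
  calc (1 : ℝ) ≤ (2 * ℓ * y) ^ 2 * (b / ℓ / (2 * y)) ^ 2 := by field_simp; exact hb1
    _ ≤ (2 * ℓ * y) ^ 2 * (δ * lam ^ 2) := by gcongr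
    _ = (2 * (ℓ * √δ * y) * lam) ^ 2 := by
        linear_combination (-(2 * ℓ * y * lam) ^ 2) * Real.sq_sqrt hδ.le

/-- The first successive minimum of `g⁻¹R(ℓ)⁰g` with respect to the convex body
`Ω(δ,1) ∩ B_∞⁰`, for `g ∈ SL₂(ℝ)` with `z = g·i` of maximal imaginary part under the
Atkin–Lehner group `A₀(N)`, is `≫ min{ℓ^(−1/2), ℓ⁻¹ δ^(−1/2) y⁻¹}`. -/
theorem stmt_14 :
    ∃ c₀ : ℝ, 0 < c₀ ∧
    ∀ (N ℓ : ℕ), 0 < N → Squarefree N → ℓ ∣ N → 0 < ℓ →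
    ∀ (g : Matrix (Fin 2) (Fin 2) ℝ), g.det = 1 →
    ∀ z : ℂ, z = ((g 0 0 : ℂ) * Complex.I + g 0 1) / ((g 1 0 : ℂ) * Complex.I + g 1 1) →
      0 < z.im →
      -- z has maximal imaginary part in its A₀(N)-orbit
      (∀ (a b c d : ℤ) (Q : ℕ), Q ∣ N → Nat.Coprime Q (N / Q) →
        (N : ℤ) ∣ c → (Q : ℤ) ∣ a → (Q : ℤ) ∣ d → a * d - b * c = (Q : ℤ) →
        ((((a : ℂ) * z + b) / ((c : ℂ) * z + d)).im ≤ z.im)) →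
    ∀ δ : ℝ, 0 < δ → δ ≤ 1 →
    ∀ lam : ℝ,
      -- lam is the first successive minimum of Ω(δ,1) ∩ B_∞⁰ on g⁻¹R(ℓ)⁰g
      (0 < lam ∧
        (∃ v ∈ lattice N ℓ g, v ≠ 0 ∧ Matrix.trace v = 0 ∧
          P v ≤ lam ^ 2 ∧ u v ≤ δ * lam ^ 2) ∧
        (∀ t : ℝ, 0 < t →
          (∃ v ∈ lattice N ℓ g, v ≠ 0 ∧ Matrix.trace v = 0 ∧
            P v ≤ t ^ 2 ∧ u v ≤ δ * t ^ 2) → lam ≤ t)) →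
      c₀ * min (Real.sqrt ℓ)⁻¹ ((ℓ * Real.sqrt δ * z.im)⁻¹) ≤ lam := by
  refine ⟨2⁻¹, by norm_num, ?_⟩
  rintro N ℓ - hN hℓN hℓ g hdet z hz hy hmax δ hδ hδ1 lam
    ⟨hlam, ⟨v, ⟨a, b, c, rfl⟩, hv0, -, hP, hu⟩, -⟩
  obtain ⟨r, s, rfl⟩ := exists_eq_of_eq_div hdet hz
  rw [det_liftOfBottomRow] at hdet
  by_cases hac : a = 0 ∧ c = 0
  · obtain ⟨rfl, rfl⟩ := hac
    have hb : b ≠ 0 := by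
      rintro rfl
      apply hv0
      simp only [Int.cast_zero, zero_div, zero_mul, neg_zero]
      rw [show !![(0 : ℝ), 0; 0, 0] = 0 from (Matrix.eta_fin_two 0).symm, mul_zero, zero_mul]
    rw [u_conj hdet] at hu
    refine (mul_le_mul_of_nonneg_left (min_le_right _ _) (by norm_num)).trans
      (half_inv_le_of_ne_zero hb (by exact_mod_cast hℓ) hy hδ hlam ?_)
    simpa using hu
  · refine (mul_le_mul_of_nonneg_left (min_le_left _ _) (by norm_num)).trans
      (half_inv_sqrt_le_of_ne_zero hN hℓN hy hmax hδ1 hlam (not_and_or.1 hac) ?_ ?_)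
    · exact (sq_sub_mul_le_u_conj hdet _ _ _).trans hu
    · exact (sq_mul_le_two_mul_P_conj hdet _ _ _).trans (by gcongr)

end Stmt14
end
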